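/- Let t_bl = (2/3)A³ + 3A²B − 3AB² + B³ + C³ ∈ ℚ[A,B,C] and let M(t_bl) = ℚ[A,B,C]/D(t_bl) be its Milnor ring, where D(t_bl) is the ideal generated by ∂t_bl/∂A, ∂t_bl/∂B, ∂t_bl/∂C. Then M(t_bl) is a finite-dimensional graded ℚ-algebra with graded dimension (1,3,3,1): the ℚ-subspace of M(t_bl) spanned by images of homogeneous polynomials of degree k has dimension 1, 3, 3, 1 for k = 0, 1, 2, 3 respectively, and is zero for k ≥ 4. In particular dim_ℚ M(t_bl) = 8. -/

import Mathlib

open MvPolynomial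

noncomputable section

/-- The trilinear form `t_bl = (2/3)A³ + 3A²B - 3AB² + B³ + C³` of the family `𝒳_bl`,
with `A = X 0`, `B = X 1`, `C = X 2`. -/
def tbl : MvPolynomial (Fin 3) ℚ :=
  C (2 / 3) * X 0 ^ 3 + C 3 * X 0 ^ 2 * X 1 - C 3 * X 0 * X 1 ^ 2 + X 1 ^ 3 + X 2 ^ 3

/-- The Jacobian ideal `D(t_bl)`. -/
def Dbl : Ideal (MvPolynomial (Fin 3) ℚ) :=
  Ideal.span {pderiv 0 tbl, pderiv 1 tbl, pderiv 2 tbl}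

/-- The Milnor ring `M(t_bl) = ℚ[A,B,C]/D(t_bl)`. -/
def Mbl : Type := MvPolynomial (Fin 3) ℚ ⧸ Dbl

instance : CommRing Mbl := Ideal.Quotient.commRing Dbl
instance : Algebra ℚ Mbl := Ideal.Quotient.algebra ℚ

/-- The degree-`k` graded piece of the Milnor ring: the image of the homogeneous
degree-`k` polynomials. -/
def mblPiece (k : ℕ) : Submodule ℚ Mbl :=
  Submodule.map (Ideal.Quotient.mkₐ ℚ Dbl).toLinearMap (homogeneousSubmodule (Fin 3) ℚ k)

/-! ### Auxiliary material -/

abbrev PP := MvPolynomial (Fin 3) ℚ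

/-- Exponent vector `(a, b, c)`. -/
def ee (a b c : ℕ) : Fin 3 →₀ ℕ :=
  Finsupp.single 0 a + Finsupp.single 1 b + Finsupp.single 2 c

@[simp] lemma ee_apply0 (a b c : ℕ) : ee a b c 0 = a := by simp [ee, Finsupp.single_apply]
@[simp] lemma ee_apply1 (a b c : ℕ) : ee a b c 1 = b := by simp [ee, Finsupp.single_apply]
@[simp] lemma ee_apply2 (a b c : ℕ) : ee a b c 2 = c := by simp [ee, Finsupp.single_apply]

lemma fin3_eq_iff (d e : Fin 3 →₀ ℕ) : d = e ↔ d 0 = e 0 ∧ d 1 = e 1 ∧ d 2 = e 2 := by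
  constructor
  · rintro rfl; exact ⟨rfl, rfl, rfl⟩
  · rintro ⟨h0, h1, h2⟩; ext i; fin_cases i <;> assumption

lemma fin3_le_iff (d e : Fin 3 →₀ ℕ) : d ≤ e ↔ d 0 ≤ e 0 ∧ d 1 ≤ e 1 ∧ d 2 ≤ e 2 := by
  rw [Finsupp.le_def]
  constructor
  · intro h; exact ⟨h 0, h 1, h 2⟩
  · rintro ⟨h0, h1, h2⟩ i; fin_cases i <;> assumption

lemma ee_sub (a b c a' b' c' : ℕ) : ee a b c - ee a' b' c' = ee (a - a') (b - b') (c - c') := by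
  ext i; fin_cases i <;> simp [Finsupp.tsub_apply]

@[simp] lemma ee000 : ee 0 0 0 = 0 := by
  ext i; fin_cases i <;> simp

lemma deg3 (d : Fin 3 →₀ ℕ) : d.degree = d 0 + d 1 + d 2 := by
  rw [Finsupp.degree_apply, Finset.sum_subset (Finset.subset_univ _), Fin.sum_univ_three]
  intro x _ hx
  simpa using Finsupp.notMem_support_iff.mp hx

lemma ee_degree (a b c : ℕ) : (ee a b c).degree = a + b + c := by
  rw [deg3]; simp

lemma monomial_ee (a b c : ℕ) : (monomial (ee a b c) 1 : PP) = X 0 ^ a * X 1 ^ b * X 2 ^ c := by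
  simp [ee, X_pow_eq_monomial, monomial_mul]

/-- The eight coordinate functionals. -/
def lam : Fin 8 → (PP →ₗ[ℚ] ℚ) :=
  ![lcoeff ℚ (ee 0 0 0), lcoeff ℚ (ee 1 0 0), lcoeff ℚ (ee 0 1 0), lcoeff ℚ (ee 0 0 1),
    lcoeff ℚ (ee 1 1 0) + (2:ℚ) • lcoeff ℚ (ee 0 2 0), lcoeff ℚ (ee 1 0 1),
    lcoeff ℚ (ee 0 1 1), lcoeff ℚ (ee 1 1 1) + (2:ℚ) • lcoeff ℚ (ee 0 2 1)]

@[simp] lemma lam0 : lam 0 = lcoeff ℚ (ee 0 0 0) := rfl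
@[simp] lemma lam1 : lam 1 = lcoeff ℚ (ee 1 0 0) := rfl
@[simp] lemma lam2 : lam 2 = lcoeff ℚ (ee 0 1 0) := rfl
@[simp] lemma lam3 : lam 3 = lcoeff ℚ (ee 0 0 1) := rfl
@[simp] lemma lam4 : lam 4 = lcoeff ℚ (ee 1 1 0) + (2:ℚ) • lcoeff ℚ (ee 0 2 0) := rfl
@[simp] lemma lam5 : lam 5 = lcoeff ℚ (ee 1 0 1) := rfl
@[simp] lemma lam6 : lam 6 = lcoeff ℚ (ee 0 1 1) := rfl
@[simp] lemma lam7 : lam 7 = lcoeff ℚ (ee 1 1 1) + (2:ℚ) • lcoeff ℚ (ee 0 2 1) := rfl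

/-- The eight square-free basis monomials. -/
def mm : Fin 8 → PP :=
  ![1, X 0, X 1, X 2, X 0 * X 1, X 0 * X 2, X 1 * X 2, X 0 * X 1 * X 2]

@[simp] lemma mm0 : mm 0 = 1 := rfl
@[simp] lemma mm1 : mm 1 = X 0 := rfl
@[simp] lemma mm2 : mm 2 = X 1 := rfl
@[simp] lemma mm3 : mm 3 = X 2 := rfl
@[simp] lemma mm4 : mm 4 = X 0 * X 1 := rfl
@[simp] lemma mm5 : mm 5 = X 0 * X 2 := rfl
@[simp] lemma mm6 : mm 6 = X 1 * X 2 := rfl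
@[simp] lemma mm7 : mm 7 = X 0 * X 1 * X 2 := rfl

/-- The "normal form coefficients" linear map. -/
def Phi : PP →ₗ[ℚ] (Fin 8 → ℚ) := LinearMap.pi lam

lemma phi_apply (p : PP) (i : Fin 8) : Phi p i = lam i p := rfl

lemma X0sq : (X 0 ^ 2 : PP) = monomial (ee 2 0 0) 1 := by rw [monomial_ee]; ring
lemma X1sq : (X 1 ^ 2 : PP) = monomial (ee 0 2 0) 1 := by rw [monomial_ee]; ring
lemma X2sq : (X 2 ^ 2 : PP) = monomial (ee 0 0 2) 1 := by rw [monomial_ee]; ring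
lemma X01 : (X 0 * X 1 : PP) = monomial (ee 1 1 0) 1 := by rw [monomial_ee]; ring

lemma X01two : (2 * (X 0 * X 1) : PP) = monomial (ee 1 1 0) 2 := by
  rw [show (2:PP) = C 2 from (map_ofNat _ 2).symm, X01, C_mul_monomial]; norm_num

lemma PhiA (p : PP) : Phi (p * X 0 ^ 2) = 0 := by
  funext j
  rw [X0sq]
  fin_cases j <;>
    simp [Phi, coeff_mul_monomial', fin3_le_iff, fin3_eq_iff, ee_sub]

lemma PhiC (p : PP) : Phi (p * X 2 ^ 2) = 0 := by
  funext j
  rw [X2sq]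
  fin_cases j <;>
    simp [Phi, coeff_mul_monomial', fin3_le_iff, fin3_eq_iff, ee_sub]

lemma PhiB (p : PP) : Phi (p * (2 * (X 0 * X 1) - X 1 ^ 2)) = 0 := by
  funext j
  rw [mul_sub, X01two, X1sq]
  fin_cases j <;>
    simp [Phi, coeff_mul_monomial', fin3_le_iff, fin3_eq_iff, ee_sub] <;>
    ring

/-! ### The partial derivatives and membership in `Dbl` -/

lemma hC3 : (C (3:ℚ) : PP) = 3 := map_ofNat _ 3
lemma hC : (C (2/3) * 3 : PP) = 2 := by
  rw [← hC3, ← C_mul]; norm_num; exact map_ofNat _ 2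

lemma pd0 : pderiv 0 tbl = 2 * X 0 ^ 2 + 6 * (X 0 * X 1) - 3 * X 1 ^ 2 := by
  simp [tbl]; rw [hC3]; linear_combination X 0 ^ 2 * hC

lemma pd1 : pderiv 1 tbl = 3 * X 0 ^ 2 - 6 * (X 0 * X 1) + 3 * X 1 ^ 2 := by
  simp [tbl]; rw [hC3]; ring

lemma pd2 : pderiv 2 tbl = 3 * X 2 ^ 2 := by
  simp [tbl]

lemma pda_mem : pderiv 0 tbl ∈ Dbl := Ideal.subset_span (by simp)
lemma pdb_mem : pderiv 1 tbl ∈ Dbl := Ideal.subset_span (by simp)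
lemma pdc_mem : pderiv 2 tbl ∈ Dbl := Ideal.subset_span (by simp)

lemma Cinv5 : (C ((5:ℚ)⁻¹) : PP) * 5 = 1 := by
  rw [show (5:PP) = C 5 from (map_ofNat _ 5).symm, ← C_mul]; norm_num
lemma Cinv15 : (C ((15:ℚ)⁻¹) : PP) * 15 = 1 := by
  rw [show (15:PP) = C 15 from (map_ofNat _ 15).symm, ← C_mul]; norm_num
lemma Cinv3 : (C ((3:ℚ)⁻¹) : PP) * 3 = 1 := by
  rw [show (3:PP) = C 3 from (map_ofNat _ 3).symm, ← C_mul]; norm_num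

lemma gA_mem : (X 0 ^ 2 : PP) ∈ Dbl := by
  have h5 : (5:PP) * X 0 ^ 2 = pderiv 0 tbl + pderiv 1 tbl := by rw [pd0, pd1]; ring
  have h : (X 0 ^ 2 : PP) = C ((5:ℚ)⁻¹) * ((5:PP) * X 0 ^ 2) := by
    rw [← mul_assoc, Cinv5, one_mul]
  rw [h, h5]
  exact Ideal.mul_mem_left _ _ (add_mem pda_mem pdb_mem)

lemma gB_mem : (2 * (X 0 * X 1) - X 1 ^ 2 : PP) ∈ Dbl := by
  have h15 : (15:PP) * (2 * (X 0 * X 1) - X 1 ^ 2)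
      = 3 * pderiv 0 tbl - 2 * pderiv 1 tbl := by rw [pd0, pd1]; ring
  have h : (2 * (X 0 * X 1) - X 1 ^ 2 : PP)
      = C ((15:ℚ)⁻¹) * ((15:PP) * (2 * (X 0 * X 1) - X 1 ^ 2)) := by
    linear_combination (-(2 * (X 0 * X 1)) + X 1 ^ 2) * Cinv15
  rw [h, h15]
  exact Ideal.mul_mem_left _ _
    (sub_mem (Ideal.mul_mem_left _ _ pda_mem) (Ideal.mul_mem_left _ _ pdb_mem))

lemma gC_mem : (X 2 ^ 2 : PP) ∈ Dbl := by
  have h3 : (3:PP) * X 2 ^ 2 = pderiv 2 tbl := by rw [pd2]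
  have h : (X 2 ^ 2 : PP) = C ((3:ℚ)⁻¹) * ((3:PP) * X 2 ^ 2) := by
    rw [← mul_assoc, Cinv3, one_mul]
  rw [h, h3]
  exact Ideal.mul_mem_left _ _ pdc_mem

lemma comb_mem (p q r : PP) :
    p * X 0 ^ 2 + q * (2 * (X 0 * X 1) - X 1 ^ 2) + r * X 2 ^ 2 ∈ Dbl :=
  add_mem (add_mem (Ideal.mul_mem_left _ _ gA_mem) (Ideal.mul_mem_left _ _ gB_mem))
    (Ideal.mul_mem_left _ _ gC_mem)

lemma Dbl_of_eq {x y : PP} (h : x ∈ Dbl) (e : y = x) : y ∈ Dbl := e ▸ h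

/-! ### `Dbl` is contained in the kernel of `Phi` -/

lemma Phi_zero_of_mem {q : PP} (hq : q ∈ Dbl) : Phi q = 0 := by
  rw [Dbl, show ({pderiv 0 tbl, pderiv 1 tbl, pderiv 2 tbl} : Set PP)
      = insert (pderiv 0 tbl) {pderiv 1 tbl, pderiv 2 tbl} from rfl,
    Ideal.mem_span_insert] at hq
  obtain ⟨a, z, hz, rfl⟩ := hq
  rw [Ideal.mem_span_pair] at hz
  obtain ⟨u, v, rfl⟩ := hz
  have h : a * pderiv 0 tbl + (u * pderiv 1 tbl + v * pderiv 2 tbl)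
      = (2*a + 3*u) * X 0 ^ 2 + (3*a - 3*u) * (2*(X 0 * X 1) - X 1 ^ 2)
        + (3*v) * X 2 ^ 2 := by
    rw [pd0, pd1, pd2]; ring
  rw [h, map_add, map_add, PhiA, PhiB, PhiC]
  simp

/-! ### Normal form: the kernel of `Phi` is contained in `Dbl` -/

def nfDiff : PP →ₗ[ℚ] PP := LinearMap.id - ∑ j : Fin 8, (lam j).smulRight (mm j)

lemma nfDiff_apply (p : PP) : nfDiff p = p - ∑ j : Fin 8, lam j p • mm j := by
  simp [nfDiff]

lemma three_add_ne_two (b : ℕ) : ¬ (3 + b = 2) := by omega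

lemma mono_ee (a b c : ℕ) : nfDiff (monomial (ee a b c) 1) ∈ Dbl := by
  rw [nfDiff_apply]
  simp only [Fin.sum_univ_eight, lam0, lam1, lam2, lam3, lam4, lam5,
    lam6, lam7, mm0, mm1, mm2, mm3, mm4, mm5, mm6, mm7,
    LinearMap.add_apply, LinearMap.smul_apply, lcoeff_apply, coeff_monomial,
    smul_eq_mul]
  rcases a with _|_|a
  · rcases b with _|_|_|b
    · rcases c with _|_|c
      · norm_num [fin3_eq_iff, monomial_ee, smul_eq_C_mul, map_ofNat, three_add_ne_two]
      · norm_num [fin3_eq_iff, monomial_ee, smul_eq_C_mul, map_ofNat, three_add_ne_two]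
      · norm_num [fin3_eq_iff, monomial_ee, smul_eq_C_mul, map_ofNat, three_add_ne_two]
        exact Dbl_of_eq (comb_mem 0 0 (X 2 ^ c)) (by ring)
    · rcases c with _|_|c
      · norm_num [fin3_eq_iff, monomial_ee, smul_eq_C_mul, map_ofNat, three_add_ne_two]
      · norm_num [fin3_eq_iff, monomial_ee, smul_eq_C_mul, map_ofNat, three_add_ne_two]
      · norm_num [fin3_eq_iff, monomial_ee, smul_eq_C_mul, map_ofNat, three_add_ne_two]
        exact Dbl_of_eq (comb_mem 0 0 (X 1 * X 2 ^ c)) (by ring)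
    · rcases c with _|_|c
      · norm_num [fin3_eq_iff, monomial_ee, smul_eq_C_mul, map_ofNat, three_add_ne_two]
        exact Dbl_of_eq (comb_mem 0 (-1) 0) (by ring)
      · norm_num [fin3_eq_iff, monomial_ee, smul_eq_C_mul, map_ofNat, three_add_ne_two]
        exact Dbl_of_eq (comb_mem 0 (-(X 2)) 0) (by ring)
      · norm_num [fin3_eq_iff, monomial_ee, smul_eq_C_mul, map_ofNat, three_add_ne_two]
        exact Dbl_of_eq (comb_mem 0 0 (X 1 ^ 2 * X 2 ^ c)) (by ring)
    · norm_num [fin3_eq_iff, monomial_ee, smul_eq_C_mul, map_ofNat, three_add_ne_two]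
      rw [if_neg (show ¬(b + 1 + 1 + 1 = 2 ∧ c = 0) by omega),
        if_neg (show ¬(b + 1 + 1 + 1 = 2 ∧ c = 1) by omega)]
      exact Dbl_of_eq
        (comb_mem (4 * X 1 ^ (b+1) * X 2 ^ c) (-((2 * X 0 + X 1) * X 1 ^ b * X 2 ^ c)) 0)
        (by ring)
  · rcases b with _|_|_|b
    · rcases c with _|_|c
      · norm_num [fin3_eq_iff, monomial_ee, smul_eq_C_mul, map_ofNat, three_add_ne_two]
      · norm_num [fin3_eq_iff, monomial_ee, smul_eq_C_mul, map_ofNat, three_add_ne_two]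
      · norm_num [fin3_eq_iff, monomial_ee, smul_eq_C_mul, map_ofNat, three_add_ne_two]
        exact Dbl_of_eq (comb_mem 0 0 (X 0 * X 2 ^ c)) (by ring)
    · rcases c with _|_|c
      · norm_num [fin3_eq_iff, monomial_ee, smul_eq_C_mul, map_ofNat, three_add_ne_two]
      · norm_num [fin3_eq_iff, monomial_ee, smul_eq_C_mul, map_ofNat, three_add_ne_two]
      · norm_num [fin3_eq_iff, monomial_ee, smul_eq_C_mul, map_ofNat, three_add_ne_two]
        exact Dbl_of_eq (comb_mem 0 0 (X 0 * X 1 * X 2 ^ c)) (by ring)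
    · norm_num [fin3_eq_iff, monomial_ee, smul_eq_C_mul, map_ofNat, three_add_ne_two]
      exact Dbl_of_eq (comb_mem (2 * X 1 * X 2 ^ c) (-(X 0 * X 2 ^ c)) 0) (by ring)
    · norm_num [fin3_eq_iff, monomial_ee, smul_eq_C_mul, map_ofNat, three_add_ne_two]
      exact Dbl_of_eq
        (comb_mem (2 * X 1 ^ (b+2) * X 2 ^ c) (-(X 0 * X 1 ^ (b+1) * X 2 ^ c)) 0)
        (by ring)
  · norm_num [fin3_eq_iff, monomial_ee, smul_eq_C_mul, map_ofNat, three_add_ne_two]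
    exact Dbl_of_eq (comb_mem (X 0 ^ a * X 1 ^ b * X 2 ^ c) 0 0) (by ring)

lemma nfDiff_mem (p : PP) : nfDiff p ∈ Dbl := by
  induction p using MvPolynomial.induction_on' with
  | monomial u a =>
      have h : (monomial u a : PP) = a • monomial u 1 := by
        rw [smul_monomial, smul_eq_mul, mul_one]
      have hu : u = ee (u 0) (u 1) (u 2) := by ext i; fin_cases i <;> simp
      rw [h, map_smul, smul_eq_C_mul, hu]
      exact Ideal.mul_mem_left _ _ (mono_ee _ _ _)
  | add p q hp hq => rw [map_add]; exact add_mem hp hq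

lemma mem_of_Phi_zero {p : PP} (h : Phi p = 0) : p ∈ Dbl := by
  have h8 : ∀ j : Fin 8, lam j p = 0 := fun j => congrFun h j
  have hd := nfDiff_mem p
  rw [nfDiff_apply] at hd
  simpa [h8] using hd

lemma ker_eq : (Dbl.restrictScalars ℚ : Submodule ℚ PP) = LinearMap.ker Phi := by
  ext q
  constructor
  · intro hq; exact LinearMap.mem_ker.mpr (Phi_zero_of_mem hq)
  · intro hq; exact mem_of_Phi_zero (LinearMap.mem_ker.mp hq)

/-! ### The induced isomorphism -/

def psi : Mbl →ₗ[ℚ] (Fin 8 → ℚ) := Submodule.liftQ (Dbl.restrictScalars ℚ) Phi ker_eq.le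

lemma psi_mk (p : PP) : psi ((Ideal.Quotient.mkₐ ℚ Dbl).toLinearMap p) = Phi p := rfl

lemma psi_comp : psi ∘ₗ (Ideal.Quotient.mkₐ ℚ Dbl).toLinearMap = Phi := rfl

lemma psi_inj : Function.Injective psi := by
  intro x y hxy
  obtain ⟨p, rfl⟩ := Ideal.Quotient.mk_surjective (I := Dbl) x
  obtain ⟨q, rfl⟩ := Ideal.Quotient.mk_surjective (I := Dbl) y
  have h : Phi p = Phi q := hxy
  exact Ideal.Quotient.eq.mpr (mem_of_Phi_zero (by rw [map_sub, h, sub_self]))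

lemma PhiM0 : Phi (monomial (ee 0 0 0) 1 : PP) = Pi.single 0 1 := by
  funext i; fin_cases i <;> simp [Phi, coeff_monomial, fin3_eq_iff, Pi.single_apply, coeff_one]
lemma PhiM1 : Phi (monomial (ee 1 0 0) 1 : PP) = Pi.single 1 1 := by
  funext i; fin_cases i <;> simp [Phi, coeff_monomial, fin3_eq_iff, Pi.single_apply, coeff_one]
lemma PhiM2 : Phi (monomial (ee 0 1 0) 1 : PP) = Pi.single 2 1 := by
  funext i; fin_cases i <;> simp [Phi, coeff_monomial, fin3_eq_iff, Pi.single_apply, coeff_one]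
lemma PhiM3 : Phi (monomial (ee 0 0 1) 1 : PP) = Pi.single 3 1 := by
  funext i; fin_cases i <;> simp [Phi, coeff_monomial, fin3_eq_iff, Pi.single_apply, coeff_one]
lemma PhiM4 : Phi (monomial (ee 1 1 0) 1 : PP) = Pi.single 4 1 := by
  funext i; fin_cases i <;> simp [Phi, coeff_monomial, fin3_eq_iff, Pi.single_apply, coeff_one]
lemma PhiM5 : Phi (monomial (ee 1 0 1) 1 : PP) = Pi.single 5 1 := by
  funext i; fin_cases i <;> simp [Phi, coeff_monomial, fin3_eq_iff, Pi.single_apply, coeff_one]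
lemma PhiM6 : Phi (monomial (ee 0 1 1) 1 : PP) = Pi.single 6 1 := by
  funext i; fin_cases i <;> simp [Phi, coeff_monomial, fin3_eq_iff, Pi.single_apply, coeff_one]
lemma PhiM7 : Phi (monomial (ee 1 1 1) 1 : PP) = Pi.single 7 1 := by
  funext i; fin_cases i <;> simp [Phi, coeff_monomial, fin3_eq_iff, Pi.single_apply, coeff_one]

lemma Phi_surj : Function.Surjective Phi := by
  intro v
  refine ⟨v 0 • monomial (ee 0 0 0) 1 + v 1 • monomial (ee 1 0 0) 1
    + v 2 • monomial (ee 0 1 0) 1 + v 3 • monomial (ee 0 0 1) 1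
    + v 4 • monomial (ee 1 1 0) 1 + v 5 • monomial (ee 1 0 1) 1
    + v 6 • monomial (ee 0 1 1) 1 + v 7 • monomial (ee 1 1 1) 1, ?_⟩
  simp only [map_add, map_smul, PhiM0, PhiM1, PhiM2, PhiM3, PhiM4, PhiM5, PhiM6, PhiM7]
  funext i
  fin_cases i <;> simp [Pi.single_apply]

lemma psi_surj : Function.Surjective psi := by
  intro v
  obtain ⟨p, hp⟩ := Phi_surj v
  exact ⟨(Ideal.Quotient.mkₐ ℚ Dbl).toLinearMap p, hp⟩

def siso : Mbl ≃ₗ[ℚ] (Fin 8 → ℚ) := LinearEquiv.ofBijective psi ⟨psi_inj, psi_surj⟩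

/-! ### The graded pieces -/

lemma homog_eq_span (k : ℕ) : homogeneousSubmodule (Fin 3) ℚ k
    = Submodule.span ℚ ((fun d => (monomial d (1:ℚ) : PP)) '' {d | d.degree = k}) := by
  rw [homogeneousSubmodule_eq_finsupp_supported, AddMonoidAlgebra.supported_eq_span_single]
  rfl

lemma piece_map (k : ℕ) : Submodule.map psi (mblPiece k)
    = Submodule.map Phi (homogeneousSubmodule (Fin 3) ℚ k) := by
  rw [mblPiece, ← psi_comp]; exact (Submodule.map_comp _ _ _).symm

lemma map_phi_homog (k : ℕ) : Submodule.map Phi (homogeneousSubmodule (Fin 3) ℚ k)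
    = Submodule.span ℚ ((fun d : Fin 3 →₀ ℕ => Phi (monomial d 1)) '' {d | d.degree = k}) := by
  rw [homog_eq_span, Submodule.map_span, Set.image_image]

/-! vanishing coordinates -/

lemma mem_span0 (w : Fin 8 → ℚ) (h1 : w 1 = 0) (h2 : w 2 = 0) (h3 : w 3 = 0)
    (h4 : w 4 = 0) (h5 : w 5 = 0) (h6 : w 6 = 0) (h7 : w 7 = 0) :
    w ∈ Submodule.span ℚ (Set.range ![(Pi.single 0 1 : Fin 8 → ℚ)]) := by
  have hw : w = w 0 • (Pi.single 0 1 : Fin 8 → ℚ) := by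
    funext i; fin_cases i <;> simp [Pi.single_apply, h1, h2, h3, h4, h5, h6, h7]
  rw [hw]
  exact Submodule.smul_mem _ _ (Submodule.subset_span ⟨0, rfl⟩)

lemma mem_span1 (w : Fin 8 → ℚ) (h0 : w 0 = 0) (h4 : w 4 = 0) (h5 : w 5 = 0)
    (h6 : w 6 = 0) (h7 : w 7 = 0) :
    w ∈ Submodule.span ℚ (Set.range
      ![(Pi.single 1 1 : Fin 8 → ℚ), Pi.single 2 1, Pi.single 3 1]) := by
  have hw : w = w 1 • (Pi.single 1 1 : Fin 8 → ℚ) + w 2 • (Pi.single 2 1 : Fin 8 → ℚ) + w 3 • (Pi.single 3 1 : Fin 8 → ℚ) := by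
    funext i; fin_cases i <;> simp [Pi.single_apply, h0, h4, h5, h6, h7]
  rw [hw]
  exact add_mem (add_mem (Submodule.smul_mem _ _ (Submodule.subset_span ⟨0, rfl⟩))
    (Submodule.smul_mem _ _ (Submodule.subset_span ⟨1, rfl⟩)))
    (Submodule.smul_mem _ _ (Submodule.subset_span ⟨2, rfl⟩))

lemma mem_span2 (w : Fin 8 → ℚ) (h0 : w 0 = 0) (h1 : w 1 = 0) (h2 : w 2 = 0)
    (h3 : w 3 = 0) (h7 : w 7 = 0) :
    w ∈ Submodule.span ℚ (Set.range
      ![(Pi.single 4 1 : Fin 8 → ℚ), Pi.single 5 1, Pi.single 6 1]) := by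
  have hw : w = w 4 • (Pi.single 4 1 : Fin 8 → ℚ) + w 5 • (Pi.single 5 1 : Fin 8 → ℚ) + w 6 • (Pi.single 6 1 : Fin 8 → ℚ) := by
    funext i; fin_cases i <;> simp [Pi.single_apply, h0, h1, h2, h3, h7]
  rw [hw]
  exact add_mem (add_mem (Submodule.smul_mem _ _ (Submodule.subset_span ⟨0, rfl⟩))
    (Submodule.smul_mem _ _ (Submodule.subset_span ⟨1, rfl⟩)))
    (Submodule.smul_mem _ _ (Submodule.subset_span ⟨2, rfl⟩))

lemma mem_span3 (w : Fin 8 → ℚ) (h0 : w 0 = 0) (h1 : w 1 = 0) (h2 : w 2 = 0)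
    (h3 : w 3 = 0) (h4 : w 4 = 0) (h5 : w 5 = 0) (h6 : w 6 = 0) :
    w ∈ Submodule.span ℚ (Set.range ![(Pi.single 7 1 : Fin 8 → ℚ)]) := by
  have hw : w = w 7 • (Pi.single 7 1 : Fin 8 → ℚ) := by
    funext i; fin_cases i <;> simp [Pi.single_apply, h0, h1, h2, h3, h4, h5, h6]
  rw [hw]
  exact Submodule.smul_mem _ _ (Submodule.subset_span ⟨0, rfl⟩)

lemma d_eq_ee (d : Fin 3 →₀ ℕ) : d = ee (d 0) (d 1) (d 2) := by
  ext i; fin_cases i <;> simp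

lemma mono_mem_homog (a b c k : ℕ) (h : a + b + c = k) :
    (monomial (ee a b c) 1 : PP) ∈ homogeneousSubmodule (Fin 3) ℚ k :=
  (mem_homogeneousSubmodule _ _).mpr (isHomogeneous_monomial _ (by rw [ee_degree, h]))

lemma map_phi_homog0 : Submodule.map Phi (homogeneousSubmodule (Fin 3) ℚ 0)
    = Submodule.span ℚ (Set.range ![(Pi.single 0 1 : Fin 8 → ℚ)]) := by
  rw [map_phi_homog]
  apply le_antisymm
  · rw [Submodule.span_le]
    rintro w ⟨d, hd, rfl⟩
    rw [Set.mem_setOf_eq, deg3] at hd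
    rw [d_eq_ee d]
    obtain ⟨a, ha⟩ : ∃ a, d 0 = a := ⟨_, rfl⟩
    obtain ⟨b, hb⟩ : ∃ b, d 1 = b := ⟨_, rfl⟩
    obtain ⟨c, hc⟩ : ∃ c, d 2 = c := ⟨_, rfl⟩
    rw [ha, hb, hc] at hd
    rw [ha, hb, hc]
    apply mem_span0 <;>
      (simp only [phi_apply, lam0, lam1, lam2, lam3, lam4, lam5, lam6, lam7,
        LinearMap.add_apply, LinearMap.smul_apply, lcoeff_apply, coeff_monomial,
        fin3_eq_iff, ee_apply0, ee_apply1, ee_apply2, smul_eq_mul];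
       split_ifs <;> (first | (exfalso; omega) | norm_num))
  · rw [Submodule.span_le]
    rintro w ⟨j, rfl⟩
    fin_cases j
    exact Submodule.subset_span ⟨ee 0 0 0, by simp [ee_degree], PhiM0⟩

lemma map_phi_homog1 : Submodule.map Phi (homogeneousSubmodule (Fin 3) ℚ 1)
    = Submodule.span ℚ (Set.range
      ![(Pi.single 1 1 : Fin 8 → ℚ), Pi.single 2 1, Pi.single 3 1]) := by
  rw [map_phi_homog]
  apply le_antisymm
  · rw [Submodule.span_le]
    rintro w ⟨d, hd, rfl⟩
    rw [Set.mem_setOf_eq, deg3] at hd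
    rw [d_eq_ee d]
    obtain ⟨a, ha⟩ : ∃ a, d 0 = a := ⟨_, rfl⟩
    obtain ⟨b, hb⟩ : ∃ b, d 1 = b := ⟨_, rfl⟩
    obtain ⟨c, hc⟩ : ∃ c, d 2 = c := ⟨_, rfl⟩
    rw [ha, hb, hc] at hd
    rw [ha, hb, hc]
    apply mem_span1 <;>
      (simp only [phi_apply, lam0, lam1, lam2, lam3, lam4, lam5, lam6, lam7,
        LinearMap.add_apply, LinearMap.smul_apply, lcoeff_apply, coeff_monomial,
        fin3_eq_iff, ee_apply0, ee_apply1, ee_apply2, smul_eq_mul];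
       split_ifs <;> (first | (exfalso; omega) | norm_num))
  · rw [Submodule.span_le]
    rintro w ⟨j, rfl⟩
    fin_cases j
    · exact Submodule.subset_span ⟨ee 1 0 0, by simp [ee_degree], PhiM1⟩
    · exact Submodule.subset_span ⟨ee 0 1 0, by simp [ee_degree], PhiM2⟩
    · exact Submodule.subset_span ⟨ee 0 0 1, by simp [ee_degree], PhiM3⟩

lemma map_phi_homog2 : Submodule.map Phi (homogeneousSubmodule (Fin 3) ℚ 2)
    = Submodule.span ℚ (Set.range
      ![(Pi.single 4 1 : Fin 8 → ℚ), Pi.single 5 1, Pi.single 6 1]) := by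
  rw [map_phi_homog]
  apply le_antisymm
  · rw [Submodule.span_le]
    rintro w ⟨d, hd, rfl⟩
    rw [Set.mem_setOf_eq, deg3] at hd
    rw [d_eq_ee d]
    obtain ⟨a, ha⟩ : ∃ a, d 0 = a := ⟨_, rfl⟩
    obtain ⟨b, hb⟩ : ∃ b, d 1 = b := ⟨_, rfl⟩
    obtain ⟨c, hc⟩ : ∃ c, d 2 = c := ⟨_, rfl⟩
    rw [ha, hb, hc] at hd
    rw [ha, hb, hc]
    apply mem_span2 <;>
      (simp only [phi_apply, lam0, lam1, lam2, lam3, lam4, lam5, lam6, lam7,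
        LinearMap.add_apply, LinearMap.smul_apply, lcoeff_apply, coeff_monomial,
        fin3_eq_iff, ee_apply0, ee_apply1, ee_apply2, smul_eq_mul];
       split_ifs <;> (first | (exfalso; omega) | norm_num))
  · rw [Submodule.span_le]
    rintro w ⟨j, rfl⟩
    fin_cases j
    · exact Submodule.subset_span ⟨ee 1 1 0, by simp [ee_degree], PhiM4⟩
    · exact Submodule.subset_span ⟨ee 1 0 1, by simp [ee_degree], PhiM5⟩
    · exact Submodule.subset_span ⟨ee 0 1 1, by simp [ee_degree], PhiM6⟩

lemma map_phi_homog3 : Submodule.map Phi (homogeneousSubmodule (Fin 3) ℚ 3)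
    = Submodule.span ℚ (Set.range ![(Pi.single 7 1 : Fin 8 → ℚ)]) := by
  rw [map_phi_homog]
  apply le_antisymm
  · rw [Submodule.span_le]
    rintro w ⟨d, hd, rfl⟩
    rw [Set.mem_setOf_eq, deg3] at hd
    rw [d_eq_ee d]
    obtain ⟨a, ha⟩ : ∃ a, d 0 = a := ⟨_, rfl⟩
    obtain ⟨b, hb⟩ : ∃ b, d 1 = b := ⟨_, rfl⟩
    obtain ⟨c, hc⟩ : ∃ c, d 2 = c := ⟨_, rfl⟩
    rw [ha, hb, hc] at hd
    rw [ha, hb, hc]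
    apply mem_span3 <;>
      (simp only [phi_apply, lam0, lam1, lam2, lam3, lam4, lam5, lam6, lam7,
        LinearMap.add_apply, LinearMap.smul_apply, lcoeff_apply, coeff_monomial,
        fin3_eq_iff, ee_apply0, ee_apply1, ee_apply2, smul_eq_mul];
       split_ifs <;> (first | (exfalso; omega) | norm_num))
  · rw [Submodule.span_le]
    rintro w ⟨j, rfl⟩
    fin_cases j
    exact Submodule.subset_span ⟨ee 1 1 1, by simp [ee_degree], PhiM7⟩

lemma map_phi_homog_ge4 (k : ℕ) (hk : 4 ≤ k) :
    Submodule.map Phi (homogeneousSubmodule (Fin 3) ℚ k) = ⊥ := by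
  rw [map_phi_homog, eq_bot_iff, Submodule.span_le]
  rintro w ⟨d, hd, rfl⟩
  rw [Set.mem_setOf_eq, deg3] at hd
  rw [d_eq_ee d]
  obtain ⟨a, ha⟩ : ∃ a, d 0 = a := ⟨_, rfl⟩
  obtain ⟨b, hb⟩ : ∃ b, d 1 = b := ⟨_, rfl⟩
  obtain ⟨c, hc⟩ : ∃ c, d 2 = c := ⟨_, rfl⟩
  rw [ha, hb, hc] at hd
  rw [ha, hb, hc]
  have : Phi (monomial (ee a b c) 1 : PP) = 0 := by
    funext j
    fin_cases j <;>
      (simp [Phi, coeff_monomial, fin3_eq_iff, smul_eq_mul];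
       (try split_ifs) <;> (first | (exfalso; omega) | omega | norm_num))
  simp [this]

/-! linear independence of the standard vectors -/

lemma li1 : LinearIndependent ℚ ![(Pi.single 0 1 : Fin 8 → ℚ)] := by
  have h : ![(Pi.single 0 1 : Fin 8 → ℚ)] = (Pi.basisFun ℚ (Fin 8)) ∘ ![0] := by
    funext j; fin_cases j <;> simp
  rw [h]
  exact (Pi.basisFun ℚ (Fin 8)).linearIndependent.comp _ (by decide)

lemma li1' : LinearIndependent ℚ ![(Pi.single 7 1 : Fin 8 → ℚ)] := by
  have h : ![(Pi.single 7 1 : Fin 8 → ℚ)] = (Pi.basisFun ℚ (Fin 8)) ∘ ![7] := by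
    funext j; fin_cases j <;> simp
  rw [h]
  exact (Pi.basisFun ℚ (Fin 8)).linearIndependent.comp _ (by decide)

lemma li3 : LinearIndependent ℚ
    ![(Pi.single 1 1 : Fin 8 → ℚ), Pi.single 2 1, Pi.single 3 1] := by
  have h : ![(Pi.single 1 1 : Fin 8 → ℚ), Pi.single 2 1, Pi.single 3 1]
      = (Pi.basisFun ℚ (Fin 8)) ∘ ![1, 2, 3] := by
    funext j; fin_cases j <;> simp
  rw [h]
  exact (Pi.basisFun ℚ (Fin 8)).linearIndependent.comp _ (by decide)

lemma li3' : LinearIndependent ℚ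
    ![(Pi.single 4 1 : Fin 8 → ℚ), Pi.single 5 1, Pi.single 6 1] := by
  have h : ![(Pi.single 4 1 : Fin 8 → ℚ), Pi.single 5 1, Pi.single 6 1]
      = (Pi.basisFun ℚ (Fin 8)) ∘ ![4, 5, 6] := by
    funext j; fin_cases j <;> simp
  rw [h]
  exact (Pi.basisFun ℚ (Fin 8)).linearIndependent.comp _ (by decide)

lemma finrank_piece (k : ℕ) : Module.finrank ℚ (mblPiece k)
    = Module.finrank ℚ (Submodule.map psi (mblPiece k)) :=
  (Submodule.equivMapOfInjective psi psi_inj _).finrank_eq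

/-- The Milnor ring `M(t_bl)` is a finite-dimensional graded `ℚ`-algebra with graded
dimension `(1,3,3,1)`, vanishing in degrees `≥ 4`; in particular `dim_ℚ M(t_bl) = 8`. -/
theorem milnor_ring_tbl_graded_dimension :
    @FiniteDimensional ℚ Mbl _ _ Algebra.toModule ∧
    Module.finrank ℚ (mblPiece 0) = 1 ∧
    Module.finrank ℚ (mblPiece 1) = 3 ∧
    Module.finrank ℚ (mblPiece 2) = 3 ∧
    Module.finrank ℚ (mblPiece 3) = 1 ∧
    (∀ k, 4 ≤ k → mblPiece k = ⊥) ∧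
    Module.finrank ℚ Mbl = 8 := by
  refine ⟨?_, ?_, ?_, ?_, ?_, ?_, ?_⟩
  · exact @Module.Finite.equiv ℚ (Fin 8 → ℚ) Mbl _ _ _ _ _ _ siso.symm
  · rw [finrank_piece, piece_map, map_phi_homog0, finrank_span_eq_card li1]
    simp
  · rw [finrank_piece, piece_map, map_phi_homog1, finrank_span_eq_card li3]
    simp
  · rw [finrank_piece, piece_map, map_phi_homog2, finrank_span_eq_card li3']
    simp
  · rw [finrank_piece, piece_map, map_phi_homog3, finrank_span_eq_card li1']
    simp
  · intro k hk
    have hbot : Submodule.map psi (mblPiece k) = ⊥ := by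
      rw [piece_map, map_phi_homog_ge4 k hk]
    rw [eq_bot_iff]
    intro x hx
    have hx' : psi x ∈ Submodule.map psi (mblPiece k) := Submodule.mem_map_of_mem hx
    rw [hbot, Submodule.mem_bot] at hx'
    have : x = 0 := psi_inj (by rw [hx', map_zero])
    simpa [this] using Submodule.zero_mem _
  · rw [siso.finrank_eq, Module.finrank_fin_fun]

end
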